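/- Let Q be a finitely splitting lim-sup tree forcing and define the ideal 𝕀 on the branch space: X ∈ 𝕀 iff for every S ∈ Q there is T ∈ Q with T ⊆ S and X ∩ lim(T) = ∅, where lim(T) is the set of branches of T. Then 𝕀 is a non-trivial σ-ideal: it is closed under subsets and countable unions, and lim(T_max) ∉ 𝕀. -/

import Mathlib

namespace Sacch

/-- The length-`n` initial segment of an infinite sequence, as a list. -/
def restr (b : ℕ → ℕ) (n : ℕ) : List ℕ := List.ofFn fun i : Fin n => b i

/-- A tree on ω: a set of finite sequences closed under initial segments. -/
def IsTree (T : Set (List ℕ)) : Prop :=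
  ∀ s t : List ℕ, s <+: t → t ∈ T → s ∈ T

/-- The set of immediate successors of `t` in `T`. -/
def succs (T : Set (List ℕ)) (t : List ℕ) : Set (List ℕ) :=
  {s | s ∈ T ∧ ∃ k : ℕ, s = t ++ [k]}

/-- `T` is finitely splitting: every node has finitely many immediate successors. -/
def FinSplit (T : Set (List ℕ)) : Prop :=
  ∀ t ∈ T, (succs T t).Finite

/-- `b` is a chain in `T`: a pairwise `≼`-comparable subset of `T`. -/
def IsChainIn (T b : Set (List ℕ)) : Prop :=
  b ⊆ T ∧ ∀ s ∈ b, ∀ t ∈ b, s <+: t ∨ t <+: s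

/-- `b` is a branch of `T`: a maximal chain. -/
def IsBranch (T b : Set (List ℕ)) : Prop :=
  IsChainIn T b ∧ ∀ b', IsChainIn T b' → b ⊆ b' → b' = b

/-- `A` is an antichain: pairwise `≼`-incomparable. -/
def IsAntichainIn (A : Set (List ℕ)) : Prop :=
  ∀ s ∈ A, ∀ t ∈ A, s ≠ t → ¬(s <+: t ∨ t <+: s)

/-- `F` is a front of `T`: an antichain in `T` meeting every branch of `T`. -/
def IsFront (T F : Set (List ℕ)) : Prop :=
  F ⊆ T ∧ IsAntichainIn F ∧ ∀ b, IsBranch T b → ∃ t ∈ b, t ∈ F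

/-- The norm `μ_T(t)` of a node `t` in a subtree `T`: the `μ`-value of its
set of immediate `T`-successors. -/
noncomputable def normOf (μ : List ℕ → Set (List ℕ) → ℝ)
    (T : Set (List ℕ)) (t : List ℕ) : ℝ := μ t (succs T t)

/-- Along the branch `b` of `T`, `limsup μ_T(b ↾ n) = ∞`. -/
def BranchLimsupInf (μ : List ℕ → Set (List ℕ) → ℝ)
    (T b : Set (List ℕ)) : Prop :=
  ∀ m : ℝ, ∀ N : ℕ, ∃ t ∈ b, N ≤ t.length ∧ m < normOf μ T t

/-- The standing assumptions on `(Tmax, μ)` making a finitely splitting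
lim-sup tree forcing: `Tmax` is a nonempty finitely splitting tree, `μ`
assigns non-negative reals monotonically to sets of successors, singletons
have norm `< 1` and along every branch of `Tmax` the limsup of the norms
is infinite. -/
structure LimSupForcing (Tmax : Set (List ℕ))
    (μ : List ℕ → Set (List ℕ) → ℝ) : Prop where
  tree : IsTree Tmax
  nonempty : Tmax.Nonempty
  finSplit : FinSplit Tmax
  mono : ∀ t : List ℕ, ∀ A B : Set (List ℕ), A ⊆ B → μ t A ≤ μ t B
  nonneg : ∀ t A, 0 ≤ μ t A
  singleton_lt_one : ∀ t s : List ℕ, μ t {s} < 1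
  limsup : ∀ b, IsBranch Tmax b → BranchLimsupInf μ Tmax b

/-- `T ∈ Q`: `T` is a condition of the lim-sup tree forcing `Q = Q(Tmax, μ)`,
i.e. a nonempty subtree of `Tmax` along each of whose branches the limsup of
the norms is infinite. -/
def memQ (Tmax : Set (List ℕ)) (μ : List ℕ → Set (List ℕ) → ℝ)
    (T : Set (List ℕ)) : Prop :=
  T.Nonempty ∧ T ⊆ Tmax ∧ IsTree T ∧
    ∀ b, IsBranch T b → BranchLimsupInf μ T b

/-- `T` is `n`-dense: there is a front of `T` all of whose nodes have
norm `> n`. -/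
def nDense (μ : List ℕ → Set (List ℕ) → ℝ) (T : Set (List ℕ)) (n : ℕ) : Prop :=
  ∃ F, IsFront T F ∧ ∀ t ∈ F, (n : ℝ) < normOf μ T t

end Sacch

namespace Sacch

/-- The branch space of a tree: the set of infinite branches
`lim(T) = {b ∈ ω^ω : ∀ n, b ↾ n ∈ T}`. -/
def Lim (T : Set (List ℕ)) : Set (ℕ → ℕ) :=
  {b | ∀ n : ℕ, restr b n ∈ T}

/-- `X ∈ 𝕀`: for every `S ∈ Q` there is `T ∈ Q`, `T ⊆ S`, with
`X ∩ lim(T) = ∅`. -/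
def memI (Tmax : Set (List ℕ)) (μ : List ℕ → Set (List ℕ) → ℝ)
    (X : Set (ℕ → ℕ)) : Prop :=
  ∀ S, memQ Tmax μ S → ∃ T, memQ Tmax μ T ∧ T ⊆ S ∧ X ∩ Lim T = ∅

end Sacch
namespace Sacch

variable {Tmax : Set (List ℕ)} {μ : List ℕ → Set (List ℕ) → ℝ}
variable {T T' T0 F G b c : Set (List ℕ)} {s t u v w : List ℕ}

lemma comp_of_prefix_prefix (h1 : u <+: w) (h2 : v <+: w) : u <+: v ∨ v <+: u := by
  rcases le_total u.length v.length with hl | hl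
  · exact Or.inl (List.prefix_of_prefix_length_le h1 h2 hl)
  · exact Or.inr (List.prefix_of_prefix_length_le h2 h1 hl)

lemma proper_length (hp : s <+: u) (hne : s ≠ u) : s.length < u.length :=
  lt_of_le_of_ne hp.length_le fun he => hne (hp.eq_of_length he)

lemma succs_subset (hsub : T ⊆ T') : succs T t ⊆ succs T' t :=
  fun s hs => ⟨hsub hs.1, hs.2⟩

lemma mem_of_succ (hs : s ∈ succs T t) : t <+: s ∧ t.length < s.length := by
  obtain ⟨-, k, rfl⟩ := hs
  exact ⟨List.prefix_append _ _, by simp⟩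

/-- Every chain in `T` extends to a branch (maximal chain). -/
lemma exists_branch (T : Set (List ℕ)) (hc : IsChainIn T c) :
    ∃ b, IsBranch T b ∧ c ⊆ b := by
  have hub : ∀ ch ⊆ {b | IsChainIn T b}, IsChain (· ⊆ ·) ch → ch.Nonempty →
      ∃ ub ∈ {b | IsChainIn T b}, ∀ s ∈ ch, s ⊆ ub := by
    intro ch hchS hchain _
    refine ⟨⋃₀ ch, ⟨fun x hx => ?_, fun x hx y hy => ?_⟩, fun s hs => Set.subset_sUnion_of_mem hs⟩
    · obtain ⟨bx, hbx, hxbx⟩ := hx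
      exact (hchS hbx).1 hxbx
    · obtain ⟨bx, hbx, hxbx⟩ := hx
      obtain ⟨by', hby, hyby⟩ := hy
      rcases eq_or_ne bx by' with rfl | hne
      · exact (hchS hbx).2 x hxbx y hyby
      · rcases hchain hbx hby hne with hss | hss
        · exact (hchS hby).2 x (hss hxbx) y hyby
        · exact (hchS hbx).2 x hxbx y (hss hyby)
  obtain ⟨m, hcm, hmax⟩ := zorn_subset_nonempty {b | IsChainIn T b} hub c hc
  exact ⟨m, ⟨hmax.1, fun b' hb' hsub => (hmax.2 hb' hsub).antisymm hsub⟩, hcm⟩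

lemma branch_mem_of_prefix (hb : IsBranch T b) (hu : u ∈ b) (hv : v ∈ T)
    (hvu : v <+: u) : v ∈ b := by
  have hchain : IsChainIn T (insert v b) := by
    refine ⟨Set.insert_subset hv hb.1.1, ?_⟩
    intro x hx y hy
    rcases hx with rfl | hx <;> rcases hy with rfl | hy
    · exact Or.inl List.prefix_rfl
    · rcases hb.1.2 u hu y hy with h1 | h1
      · exact Or.inl (hvu.trans h1)
      · exact comp_of_prefix_prefix hvu h1
    · rcases hb.1.2 u hu x hx with h1 | h1
      · exact Or.inr (hvu.trans h1)
      · exact (comp_of_prefix_prefix hvu h1).symm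
    · exact hb.1.2 x hx y hy
  have := hb.2 _ hchain (Set.subset_insert _ _)
  rw [← this]; exact Set.mem_insert _ _

lemma branch_nonempty (hT : T.Nonempty) (hb : IsBranch T b) : b.Nonempty := by
  by_contra hne
  rw [Set.not_nonempty_iff_eq_empty] at hne
  obtain ⟨x, hx⟩ := hT
  have hchain : IsChainIn T {x} := ⟨Set.singleton_subset_iff.2 hx, by
    rintro s rfl t rfl; exact Or.inl List.prefix_rfl⟩
  have := hb.2 {x} hchain (by rw [hne]; exact Set.empty_subset _)
  rw [hne] at this
  exact Set.singleton_ne_empty x this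

lemma nil_mem (hT : IsTree T) (hne : T.Nonempty) : ([] : List ℕ) ∈ T := by
  obtain ⟨x, hx⟩ := hne
  exact hT [] x (List.nil_prefix) hx

lemma nil_mem_branch (hT : IsTree T) (hne : T.Nonempty) (hb : IsBranch T b) :
    ([] : List ℕ) ∈ b := by
  obtain ⟨u, hu⟩ := branch_nonempty hne hb
  exact branch_mem_of_prefix hb hu (nil_mem hT hne) (List.nil_prefix)

lemma branch_unbounded_of_noleaf (hT : IsTree T) (hne : T.Nonempty)
    (hnl : ∀ t ∈ T, ∃ k, t ++ [k] ∈ T) (hb : IsBranch T b) :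
    ∀ N, ∃ u ∈ b, N ≤ u.length := by
  intro N
  by_contra hcon
  push_neg at hcon
  classical
  obtain ⟨u0, hu0⟩ := branch_nonempty hne hb
  set P : ℕ → Prop := fun n => ∃ u ∈ b, u.length = n with hP
  have hPn : P (Nat.findGreatest P N) :=
    Nat.findGreatest_spec (le_of_lt (hcon u0 hu0)) ⟨u0, hu0, rfl⟩
  obtain ⟨us, husb, husl⟩ := hPn
  have hmaxlen : ∀ v ∈ b, v.length ≤ us.length := by
    intro v hv
    rw [husl]
    by_contra hlt
    push_neg at hlt
    exact Nat.findGreatest_is_greatest hlt (le_of_lt (hcon v hv)) ⟨v, hv, rfl⟩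
  obtain ⟨k, hk⟩ := hnl us (hb.1.1 husb)
  have hchain : IsChainIn T (insert (us ++ [k]) b) := by
    refine ⟨Set.insert_subset hk hb.1.1, ?_⟩
    have hpre : ∀ v ∈ b, v <+: us ++ [k] := by
      intro v hv
      rcases hb.1.2 v hv us husb with h1 | h1
      · exact h1.trans (List.prefix_append _ _)
      · have := h1.eq_of_length (le_antisymm h1.length_le (hmaxlen v hv))
        rw [← this]; exact List.prefix_append _ _
    intro x hx y hy
    rcases hx with rfl | hx <;> rcases hy with rfl | hy
    · exact Or.inl List.prefix_rfl
    · exact Or.inr (hpre y hy)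
    · exact Or.inl (hpre x hx)
    · exact hb.1.2 x hx y hy
  have heq := hb.2 _ hchain (Set.subset_insert _ _)
  have : us ++ [k] ∈ b := by rw [← heq]; exact Set.mem_insert _ _
  have := hmaxlen _ this
  simp at this

lemma exists_mem_len (hT : IsTree T) (hb : IsBranch T b) (hu : u ∈ b)
    {n : ℕ} (hn : n ≤ u.length) : ∃ v ∈ b, v.length = n ∧ v <+: u := by
  refine ⟨u.take n, ?_, by simp [hn], List.take_prefix n u⟩
  exact branch_mem_of_prefix hb hu (hT _ u (List.take_prefix n u) (hb.1.1 hu)) (List.take_prefix n u)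

lemma noLeaf (hTq : memQ Tmax μ T) (ht : t ∈ T) : ∃ k, t ++ [k] ∈ T := by
  have hchain : IsChainIn T {t} := ⟨Set.singleton_subset_iff.2 ht, by
    rintro s rfl u rfl; exact Or.inl List.prefix_rfl⟩
  obtain ⟨b, hb, hsub⟩ := exists_branch T hchain
  obtain ⟨u, hub, hlen, -⟩ := hTq.2.2.2 b hb 0 (t.length + 1)
  have htb : t ∈ b := hsub rfl
  have htu : t <+: u := by
    rcases hb.1.2 t htb u hub with h1 | h1
    · exact h1
    · exact absurd h1.length_le (by omega)
  obtain ⟨r, rfl⟩ := htu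
  rcases r with _ | ⟨k, r'⟩
  · simp at hlen
  · exact ⟨k, hTq.2.2.1 (t ++ [k]) (t ++ (k :: r')) ⟨r', by simp⟩ (hb.1.1 hub)⟩

lemma branch_unbounded (hTq : memQ Tmax μ T) (hb : IsBranch T b) :
    ∀ N, ∃ u ∈ b, N ≤ u.length := by
  intro N
  obtain ⟨u, hu, hlen, -⟩ := hTq.2.2.2 b hb 0 N
  exact ⟨u, hu, hlen⟩

/-- If `F` is a front of `T0` and `b` is an unbounded branch of a subtree
`T ⊆ T0`, then `b` meets `F`. -/
lemma meetFront (hF : IsFront T0 F) (hsub : T ⊆ T0) (hTt : IsTree T)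
    (hb : IsBranch T b) (hunb : ∀ N, ∃ u ∈ b, N ≤ u.length) :
    ∃ t ∈ b, t ∈ F := by
  have hchain : IsChainIn T0 b := ⟨hb.1.1.trans hsub, hb.1.2⟩
  obtain ⟨b'', hb'', hbsub⟩ := exists_branch T0 hchain
  obtain ⟨t, htb'', htF⟩ := hF.2.2 b'' hb''
  obtain ⟨u, hub, hlen⟩ := hunb t.length
  obtain ⟨v, hvb, hvlen, -⟩ := exists_mem_len hTt hb hub hlen
  have hvt : v = t := by
    rcases hb''.1.2 v (hbsub hvb) t htb'' with h1 | h1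
    · exact h1.eq_of_length (by rw [hvlen])
    · exact (h1.eq_of_length (by rw [hvlen])).symm
  exact ⟨v, hvb, hvt ▸ htF⟩

/-- The restriction of a condition to a node is a condition. -/
lemma restrict_memQ (hTq : memQ Tmax μ T) (hs : s ∈ T) :
    memQ Tmax μ {u | u ∈ T ∧ (u <+: s ∨ s <+: u)} := by
  obtain ⟨hne, hsubM, htree, hbr⟩ := hTq
  set Ts := {u | u ∈ T ∧ (u <+: s ∨ s <+: u)} with hTs
  have htree' : IsTree Ts := by
    intro v u hvu hu
    refine ⟨htree v u hvu hu.1, ?_⟩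
    rcases hu.2 with h1 | h1
    · exact Or.inl (hvu.trans h1)
    · exact comp_of_prefix_prefix hvu h1
  refine ⟨⟨s, hs, Or.inl List.prefix_rfl⟩, fun u hu => hsubM hu.1, htree', ?_⟩
  intro b hb
  have hsb : s ∈ b := by
    have hchain : IsChainIn Ts (insert s b) := by
      refine ⟨Set.insert_subset ⟨hs, Or.inl List.prefix_rfl⟩ hb.1.1, ?_⟩
      intro x hx y hy
      rcases hx with rfl | hx <;> rcases hy with rfl | hy
      · exact Or.inl List.prefix_rfl
      · exact (hb.1.1 hy).2.symm
      · exact (hb.1.1 hx).2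
      · exact hb.1.2 x hx y hy
    have := hb.2 _ hchain (Set.subset_insert _ _)
    rw [← this]; exact Set.mem_insert _ _
  have hbT : IsBranch T b := by
    refine ⟨⟨fun x hx => (hb.1.1 hx).1, hb.1.2⟩, ?_⟩
    intro c' hc' hsubc
    refine hb.2 c' ⟨fun x hx => ⟨hc'.1 hx, ?_⟩, hc'.2⟩ hsubc
    exact hc'.2 x hx s (hsubc hsb)
  intro m N
  obtain ⟨u, hub, hulen, hun⟩ := hbr b hbT m (max N s.length)
  have hsu : s <+: u := by
    rcases (hb.1.1 hub).2 with h1 | h1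
    · have : u = s := h1.eq_of_length
        (le_antisymm h1.length_le (le_trans (le_max_right _ _) hulen))
      rw [this]
    · exact h1
  have hsucc : succs Ts u = succs T u := by
    ext w
    refine ⟨fun hw => ⟨hw.1.1, hw.2⟩, fun hw => ⟨⟨hw.1, Or.inr ?_⟩, hw.2⟩⟩
    exact hsu.trans (mem_of_succ hw).1
  refine ⟨u, hub, le_trans (le_max_left _ _) hulen, ?_⟩
  unfold normOf
  rw [hsucc]
  exact hun

/-- Front existence: below any condition `T` with front `G` there is a front
of `T` of nodes of large length and norm lying strictly above successors of
`G`-nodes. -/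
lemma exists_front (hTq : memQ Tmax μ T) (hG : IsFront T G) (m : ℝ) (N : ℕ) :
    ∃ F, IsFront T F ∧ ∀ u ∈ F, N ≤ u.length ∧ m < normOf μ T u ∧
      ∃ t ∈ G, ∃ s ∈ succs T t, s <+: u ∧ s ≠ u := by
  classical
  set P : List ℕ → Prop := fun u => u ∈ T ∧ N ≤ u.length ∧ m < normOf μ T u ∧
      ∃ t ∈ G, ∃ s ∈ succs T t, s <+: u ∧ s ≠ u with hPdef
  refine ⟨{u | P u ∧ ∀ v, v <+: u → v ≠ u → ¬ P v}, ⟨fun u hu => hu.1.1, ?_, ?_⟩,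
    fun u hu => ⟨hu.1.2.1, hu.1.2.2.1, hu.1.2.2.2⟩⟩
  · -- antichain
    intro s1 hs1 s2 hs2 hne hcomp
    rcases hcomp with h1 | h1
    · exact hs2.2 s1 h1 hne hs1.1
    · exact hs1.2 s2 h1 (Ne.symm hne) hs2.1
  · -- front
    intro b hb
    obtain ⟨t, htb, htG⟩ := hG.2.2 b hb
    obtain ⟨w0, hw0b, hw0len⟩ := branch_unbounded hTq hb (t.length + 1)
    obtain ⟨u0, hu0b, hu0len, -⟩ := exists_mem_len hTq.2.2.1 hb hw0b hw0len
    have htu0 : t <+: u0 := by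
      rcases hb.1.2 t htb u0 hu0b with h1 | h1
      · exact h1
      · exact absurd h1.length_le (by omega)
    have hu0succ : u0 ∈ succs T t := by
      refine ⟨hb.1.1 hu0b, ?_⟩
      obtain ⟨r, rfl⟩ := htu0
      have : r.length = 1 := by simpa using hu0len
      obtain ⟨a, rfl⟩ := List.length_eq_one_iff.1 this
      exact ⟨a, rfl⟩
    obtain ⟨u, hub, hulen, hun⟩ := hTq.2.2.2 b hb m (max N (u0.length + 1))
    have hu0u : u0 <+: u := by
      rcases hb.1.2 u0 hu0b u hub with h1 | h1
      · exact h1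
      · exact absurd h1.length_le (by
          have := le_trans (le_max_right _ _) hulen; omega)
    have hPu : P u := by
      refine ⟨hb.1.1 hub, le_trans (le_max_left _ _) hulen, hun,
        t, htG, u0, hu0succ, hu0u, ?_⟩
      intro he
      have h2 := le_trans (le_max_right _ _) hulen
      rw [he] at h2
      omega
    -- minimal prefix of u satisfying P
    have hQex : ∃ n, ∃ v, v <+: u ∧ v.length = n ∧ P v := ⟨u.length, u, List.prefix_rfl, rfl, hPu⟩
    set Q : ℕ → Prop := fun n => ∃ v, v <+: u ∧ v.length = n ∧ P v with hQdef
    obtain ⟨v0, hv0u, hv0len, hPv0⟩ := Nat.find_spec hQex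
    refine ⟨v0, branch_mem_of_prefix hb hub hPv0.1 hv0u, hPv0, ?_⟩
    intro w hwv0 hwne hPw
    have hwlen : w.length < v0.length := proper_length hwv0 hwne
    have : Q w.length := ⟨w, hwv0.trans hv0u, rfl, hPw⟩
    exact Nat.find_min hQex (by omega : w.length < Nat.find hQex) this

lemma restr_length (x : ℕ → ℕ) (n : ℕ) : (restr x n).length = n := by simp [restr]

lemma restr_succ (x : ℕ → ℕ) (n : ℕ) : restr x (n + 1) = restr x n ++ [x n] := by
  rw [restr, restr, List.ofFn_succ', List.concat_eq_append]
  simp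

lemma restr_prefix (x : ℕ → ℕ) {a b : ℕ} (hab : a ≤ b) : restr x a <+: restr x b := by
  induction b with
  | zero => have ha : a = 0 := by omega
            subst ha; exact List.prefix_rfl
  | succ b ih =>
    rcases Nat.lt_or_ge a (b + 1) with hlt | hge
    · exact (ih (by omega)).trans (by rw [restr_succ]; exact List.prefix_append _ _)
    · have ha : a = b + 1 := by omega
      subst ha; exact List.prefix_rfl

/-- The fusion step: shrink `T` to `T'` avoiding `X`, while fixing a front `F`
of large norms above the successors of the previous front `G`, changing nothing
on or immediately above `F`. -/
lemma step (hμ : ∀ t : List ℕ, ∀ A B : Set (List ℕ), A ⊆ B → μ t A ≤ μ t B)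
    (hTq : memQ Tmax μ T) (hG : IsFront T G)
    {X : Set (ℕ → ℕ)} (hX : memI Tmax μ X) (n : ℕ) :
    ∃ T' F : Set (List ℕ),
      memQ Tmax μ T' ∧ T' ⊆ T ∧ IsFront T' F ∧
      (∀ u ∈ F, n ≤ u.length ∧ (n : ℝ) < normOf μ T u ∧ succs T' u = succs T u) ∧
      (∀ u ∈ F, ∃ t ∈ G, ∃ s ∈ succs T t, s <+: u ∧ s ≠ u) ∧
      (∀ u, u ∈ T → u ∉ T' → ∃ t ∈ F, ∃ s ∈ succs T t, s <+: u ∧ s ≠ u) ∧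
      X ∩ Lim T' = ∅ := by
  classical
  obtain ⟨F, hF, hFprops⟩ := exists_front hTq hG (n : ℝ) n
  set FS : Set (List ℕ) := {s | ∃ t ∈ F, s ∈ succs T t} with hFSdef
  have fs_mem_T : ∀ s ∈ FS, s ∈ T := by
    rintro s ⟨t, ht, hsT, k, rfl⟩; exact hsT
  have fs_unique : ∀ s1 ∈ FS, ∀ s2 ∈ FS, ∀ w : List ℕ, s1 <+: w → s2 <+: w → s1 = s2 := by
    rintro s1 ⟨t1, ht1, hs1T, k1, rfl⟩ s2 ⟨t2, ht2, hs2T, k2, rfl⟩ w h1 h2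
    have ht12 : t1 = t2 := by
      by_contra hne
      exact hF.2.1 t1 ht1 t2 ht2 hne
        (comp_of_prefix_prefix ((List.prefix_append _ _).trans h1)
          ((List.prefix_append _ _).trans h2))
    subst ht12
    have hlen : (t1 ++ [k1]).length ≤ (t1 ++ [k2]).length := by simp
    exact (List.prefix_of_prefix_length_le h1 h2 hlen).eq_of_length (by simp)
  have hRex : ∀ s, s ∈ FS → ∃ R, memQ Tmax μ R ∧
      R ⊆ {u | u ∈ T ∧ (u <+: s ∨ s <+: u)} ∧ X ∩ Lim R = ∅ :=
    fun s hs => hX _ (restrict_memQ hTq (fs_mem_T s hs))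
  choose! R hRQ hRsub hRX using hRex
  have s_mem_R : ∀ s ∈ FS, s ∈ R s := by
    intro s hs
    obtain ⟨t0, ht0⟩ := (hRQ s hs).1
    have hchain : IsChainIn (R s) {t0} := ⟨Set.singleton_subset_iff.2 ht0, by
      rintro a rfl b rfl; exact Or.inl List.prefix_rfl⟩
    obtain ⟨b, hb, -⟩ := exists_branch (R s) hchain
    obtain ⟨u, hub, hulen, -⟩ := (hRQ s hs).2.2.2 b hb 0 s.length
    have hu : u ∈ R s := hb.1.1 hub
    have hsu : s <+: u := by
      rcases (hRsub s hs hu).2 with h1 | h1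
      · rw [h1.eq_of_length (le_antisymm h1.length_le hulen)]
      · exact h1
    exact (hRQ s hs).2.2.1 s u hsu hu
  set T' : Set (List ℕ) := {u | u ∈ T ∧ ∀ s ∈ FS, s <+: u → u ∈ R s} with hT'def
  have hT'sub : T' ⊆ T := fun u hu => hu.1
  have tree' : IsTree T' := by
    intro v u hvu hu
    exact ⟨hTq.2.2.1 v u hvu hu.1,
      fun s hs hsv => (hRQ s hs).2.2.1 v u hvu (hu.2 s hs (hsv.trans hvu))⟩
  have nil' : ([] : List ℕ) ∈ T' := by
    refine ⟨nil_mem hTq.2.2.1 hTq.1, ?_⟩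
    rintro s ⟨t, ht, hsT, k, rfl⟩ hpre
    have := hpre.length_le; simp at this
  have no_FS_prefix_F : ∀ t ∈ F, ∀ s ∈ FS, ¬ s <+: t := by
    rintro t ht s ⟨t', ht', hsT, k, rfl⟩ hpre
    have ht't : t' <+: t := (List.prefix_append _ _).trans hpre
    have hne : t' ≠ t := by
      rintro rfl
      have := hpre.length_le; simp at this
    exact hF.2.1 t' ht' t ht hne (Or.inl ht't)
  have F_sub_T' : F ⊆ T' := fun t ht =>
    ⟨hF.1 ht, fun s hs hpre => absurd hpre (no_FS_prefix_F t ht s hs)⟩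
  have R_sub_T' : ∀ s ∈ FS, R s ⊆ T' := by
    intro s hs u hu
    refine ⟨(hRsub s hs hu).1, fun s' hs' hs'u => ?_⟩
    have hss : s' = s := by
      rcases (hRsub s hs hu).2 with h1 | h1
      · exact fs_unique s' hs' s hs s (hs'u.trans h1) List.prefix_rfl
      · exact fs_unique s' hs' s hs u hs'u h1
    rw [hss]; exact hu
  have succs_pres : ∀ t ∈ F, succs T' t = succs T t := by
    intro t ht
    apply Set.Subset.antisymm (succs_subset hT'sub)
    rintro u ⟨huT, k, rfl⟩
    refine ⟨⟨huT, ?_⟩, k, rfl⟩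
    intro s hs hpre
    rcases lt_or_eq_of_le hpre.length_le with hlt | hle
    · have hst : s <+: t := List.prefix_of_prefix_length_le hpre
        (List.prefix_append _ _) (by simp at hlt ⊢; omega)
      exact absurd hst (no_FS_prefix_F t ht s hs)
    · have heq : s = t ++ [k] := hpre.eq_of_length hle
      subst heq
      exact s_mem_R _ hs
  have noleaf' : ∀ u ∈ T', ∃ k, u ++ [k] ∈ T' := by
    intro u hu
    by_cases hcase : ∃ s ∈ FS, s <+: u
    · obtain ⟨s, hs, hsu⟩ := hcase
      obtain ⟨k, hk⟩ := noLeaf (hRQ s hs) (hu.2 s hs hsu)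
      exact ⟨k, R_sub_T' s hs hk⟩
    · obtain ⟨k, hk⟩ := noLeaf hTq hu.1
      refine ⟨k, hk, ?_⟩
      intro s hs hpre
      rcases lt_or_eq_of_le hpre.length_le with hlt | hle
      · have hst : s <+: u := List.prefix_of_prefix_length_le hpre
          (List.prefix_append _ _) (by simp at hlt ⊢; omega)
        exact (hcase ⟨s, hs, hst⟩).elim
      · have heq : s = u ++ [k] := hpre.eq_of_length hle
        subst heq
        exact s_mem_R _ hs
  have chain_in_R : ∀ b, IsBranch T' b → (∀ N, ∃ u ∈ b, N ≤ u.length) →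
      ∃ s ∈ FS, b ⊆ R s := by
    intro b hb hunb
    obtain ⟨t, htb, htF⟩ := meetFront hF hT'sub tree' hb hunb
    obtain ⟨w0, hw0b, hw0len⟩ := hunb (t.length + 1)
    obtain ⟨u0, hu0b, hu0len, -⟩ := exists_mem_len tree' hb hw0b hw0len
    have htu0 : t <+: u0 := by
      rcases hb.1.2 t htb u0 hu0b with h1 | h1
      · exact h1
      · exact absurd h1.length_le (by omega)
    have hu0FS : u0 ∈ FS := by
      refine ⟨t, htF, hT'sub (hb.1.1 hu0b), ?_⟩
      obtain ⟨r, rfl⟩ := htu0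
      have hr : r.length = 1 := by simpa using hu0len
      obtain ⟨a, rfl⟩ := List.length_eq_one_iff.1 hr
      exact ⟨a, rfl⟩
    refine ⟨u0, hu0FS, fun v hv => ?_⟩
    rcases hb.1.2 v hv u0 hu0b with h1 | h1
    · exact (hRQ u0 hu0FS).2.2.1 v u0 h1 (s_mem_R u0 hu0FS)
    · exact (hb.1.1 hv).2 u0 hu0FS h1
  have hbrs : ∀ b, IsBranch T' b → BranchLimsupInf μ T' b := by
    intro b hb
    have hunb := branch_unbounded_of_noleaf tree' ⟨[], nil'⟩ noleaf' hb
    obtain ⟨s, hsFS, hbsub⟩ := chain_in_R b hb hunb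
    have hbR : IsBranch (R s) b := by
      refine ⟨⟨hbsub, hb.1.2⟩, ?_⟩
      intro c' hc' hsubc
      exact hb.2 c' ⟨hc'.1.trans (R_sub_T' s hsFS), hc'.2⟩ hsubc
    intro m N
    obtain ⟨u, hub, hulen, hun⟩ := (hRQ s hsFS).2.2.2 b hbR m N
    refine ⟨u, hub, hulen, lt_of_lt_of_le hun ?_⟩
    exact hμ u _ _ (succs_subset (R_sub_T' s hsFS))
  have hT'Q : memQ Tmax μ T' := ⟨⟨[], nil'⟩, hT'sub.trans hTq.2.1, tree', hbrs⟩
  have hF' : IsFront T' F := by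
    refine ⟨F_sub_T', hF.2.1, fun b hb => ?_⟩
    exact meetFront hF hT'sub tree' hb
      (branch_unbounded_of_noleaf tree' ⟨[], nil'⟩ noleaf' hb)
  have hXdisj : X ∩ Lim T' = ∅ := by
    by_contra hcon
    obtain ⟨x, hxX, hxL⟩ := Set.nonempty_iff_ne_empty.2 hcon
    have hchain : IsChainIn T' {v | ∃ nn, v = restr x nn} := by
      constructor
      · rintro v ⟨nn, rfl⟩; exact hxL nn
      · rintro v ⟨a, rfl⟩ w ⟨bb, rfl⟩
        rcases le_total a bb with hab | hab
        · exact Or.inl (restr_prefix x hab)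
        · exact Or.inr (restr_prefix x hab)
    obtain ⟨b, hb, hcsub⟩ := exists_branch T' hchain
    have hunb : ∀ N, ∃ u ∈ b, N ≤ u.length :=
      fun N => ⟨restr x N, hcsub ⟨N, rfl⟩, by rw [restr_length]⟩
    obtain ⟨s, hsFS, hbsub⟩ := chain_in_R b hb hunb
    have hxR : x ∈ Lim (R s) := fun nn => hbsub (hcsub ⟨nn, rfl⟩)
    have hdis := hRX s hsFS
    rw [Set.eq_empty_iff_forall_notMem] at hdis
    exact hdis x ⟨hxX, hxR⟩
  have hrem : ∀ u, u ∈ T → u ∉ T' → ∃ t ∈ F, ∃ s ∈ succs T t, s <+: u ∧ s ≠ u := by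
    intro u huT huT'
    have hcon : ¬ ∀ s ∈ FS, s <+: u → u ∈ R s := fun hcc => huT' ⟨huT, hcc⟩
    push_neg at hcon
    obtain ⟨s, hs, hsu, hunR⟩ := hcon
    have hne : s ≠ u := by
      rintro rfl
      exact hunR (s_mem_R s hs)
    obtain ⟨t, htF, hssucc⟩ := hs
    exact ⟨t, htF, s, hssucc, hsu, hne⟩
  exact ⟨T', F, hT'Q, hT'sub, hF',
    fun u hu => ⟨(hFprops u hu).1, (hFprops u hu).2.1, succs_pres u hu⟩,
    fun u hu => (hFprops u hu).2.2, hrem, hXdisj⟩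

/-- State for the fusion recursion: a condition together with a front. -/
structure FusionSt (Tmax : Set (List ℕ)) (μ : List ℕ → Set (List ℕ) → ℝ) where
  T : Set (List ℕ)
  G : Set (List ℕ)
  hT : memQ Tmax μ T
  hG : IsFront T G

/-- Closure of the ideal under countable unions, via fusion. -/
lemma union_memI (h : LimSupForcing Tmax μ) (X : ℕ → Set (ℕ → ℕ))
    (hX : ∀ i, memI Tmax μ (X i)) : memI Tmax μ (⋃ i, X i) := by
  intro S hS
  classical
  have hG0 : IsFront S {([] : List ℕ)} := by
    refine ⟨Set.singleton_subset_iff.2 (nil_mem hS.2.2.1 hS.1), ?_, ?_⟩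
    · rintro a rfl bb rfl hne; exact (hne rfl).elim
    · intro b hb
      exact ⟨[], nil_mem_branch hS.2.2.1 hS.1 hb, rfl⟩
  set st0 : FusionSt Tmax μ := ⟨S, {[]}, hS, hG0⟩ with hst0
  have hstep : ∀ (p : FusionSt Tmax μ) (n : ℕ), ∃ q : FusionSt Tmax μ,
      q.T ⊆ p.T ∧
      (∀ u ∈ q.G, n ≤ u.length ∧ (n : ℝ) < normOf μ p.T u ∧
        succs q.T u = succs p.T u) ∧
      (∀ u ∈ q.G, ∃ t ∈ p.G, ∃ s ∈ succs p.T t, s <+: u ∧ s ≠ u) ∧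
      (∀ u, u ∈ p.T → u ∉ q.T →
        ∃ t ∈ q.G, ∃ s ∈ succs p.T t, s <+: u ∧ s ≠ u) ∧
      X n ∩ Lim q.T = ∅ := by
    intro p n
    obtain ⟨T', F, hT'Q, hsub, hF', hnorm, hext, hrem, hdisj⟩ :=
      step h.mono p.hT p.hG (hX n) n
    exact ⟨⟨T', F, hT'Q, hF'⟩, hsub, hnorm, hext, hrem, hdisj⟩
  obtain ⟨f, hf0, hf⟩ : ∃ f : ℕ → FusionSt Tmax μ, f 0 = st0 ∧ ∀ n,
      (f (n+1)).T ⊆ (f n).T ∧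
      (∀ u ∈ (f (n+1)).G, n ≤ u.length ∧ (n : ℝ) < normOf μ (f n).T u ∧
        succs (f (n+1)).T u = succs (f n).T u) ∧
      (∀ u ∈ (f (n+1)).G, ∃ t ∈ (f n).G, ∃ s ∈ succs (f n).T t, s <+: u ∧ s ≠ u) ∧
      (∀ u, u ∈ (f n).T → u ∉ (f (n+1)).T →
        ∃ t ∈ (f (n+1)).G, ∃ s ∈ succs (f n).T t, s <+: u ∧ s ≠ u) ∧
      (X n ∩ Lim (f (n+1)).T = ∅) := by
    refine ⟨fun n => Nat.rec st0 (fun n p => Classical.choose (hstep p n)) n, rfl,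
      fun n => ?_⟩
    exact Classical.choose_spec (hstep _ n)
  have hdec : ∀ a b : ℕ, a ≤ b → (f b).T ⊆ (f a).T := by
    intro a b hab
    induction hab with
    | refl => exact subset_rfl
    | step hmn ih => exact ((hf _).1).trans ih
  have hCF : ∀ i j : ℕ, i < j → ∀ u ∈ (f (j+1)).G, ∃ t ∈ (f (i+1)).G,
      t <+: u ∧ t.length < u.length := by
    intro i j
    induction j with
    | zero => intro hij; omega
    | succ j ih =>
      intro hij u hu
      obtain ⟨t1, ht1, s1, hs1, hs1u, hs1ne⟩ := (hf (j+1)).2.2.1 u hu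
      have hplen := proper_length hs1u hs1ne
      obtain ⟨ht1pre, ht1len⟩ := mem_of_succ hs1
      have ht1upre : t1 <+: u := ht1pre.trans hs1u
      have ht1ulen : t1.length < u.length := lt_trans ht1len hplen
      rcases Nat.lt_or_ge i j with hlt | hge
      · obtain ⟨t, ht, htpre, htlen⟩ := ih hlt t1 ht1
        exact ⟨t, ht, htpre.trans ht1upre, lt_trans htlen ht1ulen⟩
      · have hij' : i = j := by omega
        subst hij'
        exact ⟨t1, ht1, ht1upre, ht1ulen⟩
  have hpres : ∀ n : ℕ, ∀ u ∈ (f (n+1)).G, ∀ m : ℕ, n + 1 ≤ m →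
      succs (f m).T u = succs (f n).T u := by
    intro n u hu m
    induction m with
    | zero => intro h0; omega
    | succ m ih =>
      intro hm
      rcases Nat.lt_or_ge (n+1) (m+1) with hlt | hge
      · have hmn : n + 1 ≤ m := by omega
        rw [← ih hmn]
        apply Set.Subset.antisymm (succs_subset (hf m).1)
        rintro s ⟨hsT, k, hk⟩
        refine ⟨?_, k, hk⟩
        by_contra hnot
        obtain ⟨t', ht', s', hs', hs's, hs'ne⟩ := (hf m).2.2.2.1 s hsT hnot
        obtain ⟨ht'pre, ht'len⟩ := mem_of_succ hs'
        have hs'len : s'.length < s.length := proper_length hs's hs'ne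
        have hus : u <+: s := hk ▸ List.prefix_append _ _
        have hulen : u.length + 1 = s.length := by rw [hk]; simp
        have ht'u : t' <+: u := List.prefix_of_prefix_length_le
          (ht'pre.trans hs's) hus (by omega)
        obtain ⟨t'', ht'', ht''pre, ht''len⟩ := hCF n m (by omega) t' ht'
        have ht''u : t'' <+: u := ht''pre.trans ht'u
        have hne'' : t'' ≠ u := by
          intro he
          have h1 := ht'u.length_le
          rw [he] at ht''len
          omega
        exact (f (n+1)).hG.2.1 t'' ht'' u hu hne'' (Or.inl ht''u)
      · have hmn : m = n := by omega
        subst hmn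
        exact ((hf m).2.1 u hu).2.2
  set TI : Set (List ℕ) := ⋂ m, (f m).T with hTIdef
  have hTIsub : ∀ m, TI ⊆ (f m).T := fun m => Set.iInter_subset _ m
  have treeI : IsTree TI := by
    intro v u hvu hu
    exact Set.mem_iInter.2 fun m => (f m).hT.2.2.1 v u hvu (Set.mem_iInter.1 hu m)
  have nilI : ([] : List ℕ) ∈ TI :=
    Set.mem_iInter.2 fun m => nil_mem (f m).hT.2.2.1 (f m).hT.1
  have hsuccsI : ∀ n, ∀ u ∈ (f (n+1)).G, succs TI u = succs (f n).T u := by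
    intro n u hu
    apply Set.Subset.antisymm (succs_subset (hTIsub n))
    rintro s ⟨hsT, k, hk⟩
    refine ⟨Set.mem_iInter.2 fun m => ?_, k, hk⟩
    rcases Nat.lt_or_ge m (n+1) with hlt | hge
    · exact hdec m n (by omega) hsT
    · have hmem : s ∈ succs (f m).T u := by
        rw [hpres n u hu m hge]; exact ⟨hsT, k, hk⟩
      exact hmem.1
  have noleafI : ∀ u ∈ TI, ∃ k, u ++ [k] ∈ TI := by
    intro u hu
    have hchoice : ∀ m : ℕ, ∃ s, s ∈ succs (f m).T u := by
      intro m
      obtain ⟨k, hk⟩ := noLeaf (f m).hT (Set.mem_iInter.1 hu m)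
      exact ⟨u ++ [k], hk, k, rfl⟩
    choose g hg using hchoice
    have hfin : (succs Tmax u).Finite :=
      h.finSplit u ((f 0).hT.2.1 (Set.mem_iInter.1 hu 0))
    have hrange : ∀ m, g m ∈ succs Tmax u := fun m => ⟨(f m).hT.2.1 (hg m).1, (hg m).2⟩
    have hinfex : ∃ s ∈ succs Tmax u, {m | g m = s}.Infinite := by
      by_contra hcon
      push_neg at hcon
      have hfin2 : ∀ s ∈ succs Tmax u, {m | g m = s}.Finite :=
        fun s hs => hcon s hs
      have hsubU : (Set.univ : Set ℕ) ⊆ ⋃ s ∈ succs Tmax u, {m | g m = s} :=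
        fun m _ => Set.mem_biUnion (hrange m) rfl
      exact Set.infinite_univ (Set.Finite.subset (hfin.biUnion hfin2) hsubU)
    obtain ⟨s, hsmem, hinf⟩ := hinfex
    have hsI : ∀ m, s ∈ (f m).T := by
      intro m
      obtain ⟨m', hm', hmm'⟩ := hinf.exists_gt m
      have : s ∈ succs (f m').T u := hm' ▸ hg m'
      exact hdec m m' (le_of_lt hmm') this.1
    obtain ⟨-, k, hk⟩ := hsmem
    exact ⟨k, hk ▸ Set.mem_iInter.2 hsI⟩
  have hQI : memQ Tmax μ TI := by
    refine ⟨⟨[], nilI⟩, (hTIsub 0).trans (f 0).hT.2.1, treeI, ?_⟩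
    intro b hb m N
    have hunb := branch_unbounded_of_noleaf treeI ⟨[], nilI⟩ noleafI hb
    obtain ⟨n0, hn0⟩ := exists_nat_ge m
    set n := max n0 N with hn
    obtain ⟨t, htb, htG⟩ := meetFront (f (n+1)).hG (hTIsub (n+1)) treeI hb hunb
    obtain ⟨hlen, hnorm, -⟩ := (hf n).2.1 t htG
    refine ⟨t, htb, le_trans (le_max_right _ _) hlen, ?_⟩
    have hnormeq : normOf μ TI t = normOf μ (f n).T t := by
      unfold normOf; rw [hsuccsI n t htG]
    rw [hnormeq]
    calc m ≤ (n0 : ℝ) := hn0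
      _ ≤ (n : ℝ) := by exact_mod_cast le_max_left _ _
      _ < _ := hnorm
  refine ⟨TI, hQI, ?_, ?_⟩
  · have hsub0 := hTIsub 0
    rw [hf0] at hsub0
    exact hsub0
  · rw [Set.eq_empty_iff_forall_notMem]
    rintro x ⟨hxU, hxL⟩
    obtain ⟨i, hxi⟩ := Set.mem_iUnion.1 hxU
    have hxLi : x ∈ Lim (f (i+1)).T := fun nn => hTIsub (i+1) (hxL nn)
    have hdis := (hf i).2.2.2.2
    rw [Set.eq_empty_iff_forall_notMem] at hdis
    exact hdis x ⟨hxi, hxLi⟩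

/-- Every condition has an infinite branch. -/
lemma lim_nonempty (hTq : memQ Tmax μ T) : (Lim T).Nonempty := by
  classical
  have hnl : ∀ t : {t // t ∈ T}, ∃ k, t.1 ++ [k] ∈ T := fun t => noLeaf hTq t.2
  choose K hK using hnl
  set g : {t // t ∈ T} → {t // t ∈ T} := fun t => ⟨t.1 ++ [K t], hK t⟩ with hg
  set ts : ℕ → {t // t ∈ T} := fun n => g^[n] ⟨[], nil_mem hTq.2.2.1 hTq.1⟩ with hts
  have hts_succ : ∀ n, (ts (n+1)).1 = (ts n).1 ++ [K (ts n)] := by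
    intro n
    have hit : ts (n+1) = g (ts n) := Function.iterate_succ_apply' g n _
    rw [hit]
  set x : ℕ → ℕ := fun i => K (ts i) with hx
  have hrestr : ∀ n, restr x n = (ts n).1 := by
    intro n
    induction n with
    | zero => simp [restr, hts]
    | succ n ih => rw [restr_succ, ih, hts_succ]
  exact ⟨x, fun n => hrestr n ▸ (ts n).2⟩

end Sacch

open Sacch in
/-- The ideal `𝕀` is a non-trivial σ-ideal: it is closed under subsets and
countable unions, and `lim(Tmax) ∉ 𝕀`. -/
theorem I_sigma_ideal (Tmax : Set (List ℕ)) (μ : List ℕ → Set (List ℕ) → ℝ)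
    (h : LimSupForcing Tmax μ) :
    (∀ X Y : Set (ℕ → ℕ), X ⊆ Y → memI Tmax μ Y → memI Tmax μ X) ∧
    (∀ X : ℕ → Set (ℕ → ℕ), (∀ i, memI Tmax μ (X i)) →
      memI Tmax μ (⋃ i, X i)) ∧
    ¬ memI Tmax μ (Lim Tmax) := by
  refine ⟨?_, fun X hX => union_memI h X hX, ?_⟩
  · intro X Y hXY hY S hS
    obtain ⟨T, hTQ, hTS, hdisj⟩ := hY S hS
    refine ⟨T, hTQ, hTS, ?_⟩
    rw [Set.eq_empty_iff_forall_notMem] at hdisj ⊢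
    exact fun x hx => hdisj x ⟨hXY hx.1, hx.2⟩
  · intro hmem
    have hQmax : memQ Tmax μ Tmax :=
      ⟨h.nonempty, subset_rfl, h.tree, fun b hb => h.limsup b hb⟩
    obtain ⟨T, hTQ, hTsub, hdisj⟩ := hmem Tmax hQmax
    obtain ⟨x, hx⟩ := lim_nonempty hTQ
    have hxmax : x ∈ Lim Tmax := fun n => hTQ.2.1 (hx n)
    rw [Set.eq_empty_iff_forall_notMem] at hdisj
    exact hdisj x ⟨hxmax, hx⟩
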